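/- arXiv:0804.1663 — 2 statements merged into one kernel-verified Lean document; each statement's English description precedes it below -/
import Mathlib

section
/- Let q_j = −i(1 − e^{−i p_j Δ})/Δ for real p_j and Δ > 0, j = 1, 2, 3, and let ρ² = (Im q₂q̄₃)² + (Im q₃q̄₁)² + (Im q₁q̄₂)². Then ρ² ≤ (1/2)·(∑_{j=1}^{3} (2 − 2cos p_j Δ)/Δ²)², i.e. ρ ≤ |q|²/√2 where |q|² = ∑_j (2 − 2cos p_jΔ)/Δ². -/
/-!
Write `zⱼ = aⱼ + i bⱼ` with `a, b ∈ ℝ³`. The numbers `Im (zⱼ z̄ₖ)` are the components of the cross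
product `a × b`, so by Lagrange's identity `ρ² = |a|²|b|² - (a ⬝ b)² ≤ |a|²|b|² ≤ ¼ (|a|² + |b|²)²`,
and `|a|² + |b|² = ∑ |zⱼ|²`. This holds for arbitrary complex numbers, with the constant `¼`; for the
lattice momenta `|qⱼ|² = (2 - 2 cos pⱼΔ)/Δ²`.
-/

open Complex ComplexConjugate

theorem Complex.sq_im_mul_conj_add_sq_add_sq_le (z₁ z₂ z₃ : ℂ) :
    (z₂ * conj z₃).im ^ 2 + (z₃ * conj z₁).im ^ 2 + (z₁ * conj z₂).im ^ 2
      ≤ (1 / 4) * (normSq z₁ + normSq z₂ + normSq z₃) ^ 2 := by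
  set a := z₁.re ^ 2 + z₂.re ^ 2 + z₃.re ^ 2
  set b := z₁.im ^ 2 + z₂.im ^ 2 + z₃.im ^ 2
  have lagrange : (z₂ * conj z₃).im ^ 2 + (z₃ * conj z₁).im ^ 2 + (z₁ * conj z₂).im ^ 2
      = a * b - (z₁.re * z₁.im + z₂.re * z₂.im + z₃.re * z₃.im) ^ 2 := by
    simp only [mul_im, conj_re, conj_im, a, b]
    ring
  have hsum : normSq z₁ + normSq z₂ + normSq z₃ = a + b := by
    simp only [normSq_apply, a, b]
    ring
  rw [lagrange, hsum]
  nlinarith [sq_nonneg (a - b), sq_nonneg (z₁.re * z₁.im + z₂.re * z₂.im + z₃.re * z₃.im)]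

theorem Complex.normSq_one_sub_exp_mul_I (θ : ℝ) :
    normSq (1 - exp (θ * I)) = 2 - 2 * Real.cos θ := by
  rw [exp_mul_I, ← ofReal_cos, ← ofReal_sin, normSq_apply]
  simp only [sub_re, one_re, add_re, ofReal_re, mul_re, I_re, I_im, ofReal_im, sub_im, one_im,
    add_im, mul_im]
  nlinarith [Real.sin_sq_add_cos_sq θ]

theorem Complex.normSq_neg_I_mul_one_sub_exp_div (Δ p : ℝ) :
    normSq (-I * (1 - exp (-I * p * Δ)) / Δ) = (2 - 2 * Real.cos (p * Δ)) / Δ ^ 2 := by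
  have hexponent : -I * p * Δ = ((-(p * Δ) : ℝ) : ℂ) * I := by push_cast; ring
  rw [hexponent, map_div₀, map_mul, normSq_one_sub_exp_mul_I, Real.cos_neg, normSq_ofReal,
    normSq_neg, normSq_I, one_mul, sq]

theorem stmt8_general (Δ : ℝ) (p₁ p₂ p₃ : ℝ)
    (q : ℝ → ℂ)
    (hq : ∀ p : ℝ, q p = -Complex.I * (1 - Complex.exp (-Complex.I * (p : ℂ) * (Δ : ℂ))) / (Δ : ℂ)) :
    ((q p₂ * starRingEnd ℂ (q p₃)).im) ^ 2 + ((q p₃ * starRingEnd ℂ (q p₁)).im) ^ 2 +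
        ((q p₁ * starRingEnd ℂ (q p₂)).im) ^ 2
      ≤ (1 / 2) *
          ((2 - 2 * Real.cos (p₁ * Δ)) / Δ ^ 2 + (2 - 2 * Real.cos (p₂ * Δ)) / Δ ^ 2 +
              (2 - 2 * Real.cos (p₃ * Δ)) / Δ ^ 2) ^ 2 := by
  have hnorm : ∀ p, normSq (q p) = (2 - 2 * Real.cos (p * Δ)) / Δ ^ 2 := fun p => by
    rw [hq, normSq_neg_I_mul_one_sub_exp_div]
  calc _ ≤ (1 / 4) * (normSq (q p₁) + normSq (q p₂) + normSq (q p₃)) ^ 2 :=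
        sq_im_mul_conj_add_sq_add_sq_le _ _ _
    _ ≤ (1 / 2) * (normSq (q p₁) + normSq (q p₂) + normSq (q p₃)) ^ 2 :=
        mul_le_mul_of_nonneg_right (by norm_num) (sq_nonneg _)
    _ = _ := by simp only [hnorm]

theorem stmt8 (Δ : ℝ) (hΔ : 0 < Δ) (p₁ p₂ p₃ : ℝ)
    (q : ℝ → ℂ)
    (hq : ∀ p : ℝ, q p = -Complex.I * (1 - Complex.exp (-Complex.I * (p : ℂ) * (Δ : ℂ))) / (Δ : ℂ)) :
    ((q p₂ * starRingEnd ℂ (q p₃)).im) ^ 2 + ((q p₃ * starRingEnd ℂ (q p₁)).im) ^ 2 +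
        ((q p₁ * starRingEnd ℂ (q p₂)).im) ^ 2
      ≤ (1 / 2) *
          ((2 - 2 * Real.cos (p₁ * Δ)) / Δ ^ 2 + (2 - 2 * Real.cos (p₂ * Δ)) / Δ ^ 2 +
              (2 - 2 * Real.cos (p₃ * Δ)) / Δ ^ 2) ^ 2 :=
  stmt8_general Δ p₁ p₂ p₃ q hq
end

section
/- Let W = {z ∈ ℂ⁴ : −Im z⁰ > |Im 𝐳| + k} for some k > 0, let F be holomorphic on W and polynomially bounded there, and let f ∈ 𝒯(T(ℝ⁴)) (a continuous function on every tube ℝ⁴ + iK, K compact convex, holomorphic in the interior, with all polynomial-weighted sup norms finite). Then for any ε, ε' > 0 the two integrals ∫_{ℝ⁴} F(x⁰ − i(k+ε), 𝐱)·f(x⁰ − i(k+ε), 𝐱) dx and ∫_{ℝ⁴} F(x⁰ − i(k+ε'), 𝐱)·f(x⁰ − i(k+ε'), 𝐱) dx are equal. -/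
open MeasureTheory

/-- The tube `T(K) = ℝ⁴ + iK` over a base `K ⊆ ℝ⁴`. -/
def tubeSet (K : Set (Fin 4 → ℝ)) : Set (Fin 4 → ℂ) :=
  {z | (fun j => (z j).im) ∈ K}

/-- Membership in the test function space `𝒯(T(ℝ⁴))`: continuous on every tube over a
compact convex base, holomorphic in its interior, with all polynomial-weighted sup
norms finite. -/
def MemTestSpace (f : (Fin 4 → ℂ) → ℂ) : Prop :=
  ∀ K : Set (Fin 4 → ℝ), IsCompact K → Convex ℝ K →
    ContinuousOn f (tubeSet K) ∧
    DifferentiableOn ℂ f (interior (tubeSet K)) ∧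
    ∀ p : Fin 4 → ℕ, ∃ C : ℝ, ∀ z ∈ tubeSet K,
      ‖(∏ j, z j ^ p j) * f z‖ ≤ C

/-- The domain `W = {z ∈ ℂ⁴ : −Im z⁰ > |Im 𝐳| + k}`. -/
def Wset (k : ℝ) : Set (Fin 4 → ℂ) :=
  {z | Real.sqrt (∑ j : Fin 3, ((z j.succ).im) ^ 2) + k < -(z 0).im}

/-- `F ∈ 𝒜₀(W)`: for all `ε, K > 0` it is polynomially bounded on the `ε`-shrunken
region of `W` intersected with `{|Im z_j| ≤ K}`. -/
def PolyBoundedOn (F : (Fin 4 → ℂ) → ℂ) (W : Set (Fin 4 → ℂ)) : Prop :=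
  ∀ ε > (0 : ℝ), ∀ K > (0 : ℝ), ∃ (p : Fin 4 → ℕ) (C : ℝ), 0 ≤ C ∧
    ∀ z : Fin 4 → ℂ, (∀ w ∉ W, ε ≤ dist z w) → (∀ j, |(z j).im| ≤ K) →
      ‖F z‖ ≤ C * (1 + ‖∏ j, z j ^ p j‖)

/-!
Write the integral over `ℝ⁴` as an iterated integral with `x⁰` innermost. For fixed real `𝐱`,
the integrand `w ↦ F(w, 𝐱) f(w, 𝐱)` is holomorphic on the closed strip between the two heights,
since that strip lies in `W` and in the interior of a tube over a compact ball. On the strip the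
polynomial bound for `F` is absorbed by the decay of `f`, giving
`|F f| ≤ B ∏ⱼ (1 + (Re zⱼ)²)⁻¹`. This bound makes both integrands integrable on `ℝ⁴`. On every
slice it also makes the vertical sides of the rectangles `[-T, T] × [heights]` vanish as
`T → ∞`, so Cauchy's theorem gives equal integrals over the two horizontal lines.
-/

open Complex Set Filter Topology

section ContourShift

variable {E : Type*} [NormedAddCommGroup E] {g : ℂ → E} {a b B : ℝ}

lemma tendsto_inv_one_add_sq_cocompact :
    Tendsto (fun T : ℝ => (1 + T ^ 2)⁻¹) (cocompact ℝ) (𝓝 0) := by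
  refine tendsto_inv_atTop_zero.comp (tendsto_atTop_add_const_left _ 1 ?_)
  refine ((tendsto_pow_atTop two_ne_zero).comp (tendsto_norm_cocompact_atTop (E := ℝ))).congr
    fun T => ?_
  simp [Real.norm_eq_abs, sq_abs]

lemma tendsto_intervalIntegral_vertical_of_decay [NormedSpace ℝ E]
    (hB : ∀ w : ℂ, w.im ∈ uIcc a b → ‖g w‖ ≤ B * (1 + w.re ^ 2)⁻¹) :
    Tendsto (fun T : ℝ => ∫ y in a..b, g (T + y * I)) (cocompact ℝ) (𝓝 0) := by
  rw [tendsto_zero_iff_norm_tendsto_zero]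
  refine squeeze_zero (fun _ => norm_nonneg _) (fun T => ?_)
    (by simpa using (tendsto_inv_one_add_sq_cocompact.const_mul B).mul_const |b - a|)
  refine intervalIntegral.norm_integral_le_of_norm_le_const fun y hy => ?_
  simpa using hB (T + y * I) (by simpa using uIoc_subset_uIcc hy)

lemma integrable_horizontal_of_decay {t : ℝ} (ht : t ∈ uIcc a b)
    (hg : ContinuousOn g (im ⁻¹' uIcc a b))
    (hB : ∀ w : ℂ, w.im ∈ uIcc a b → ‖g w‖ ≤ B * (1 + w.re ^ 2)⁻¹) :
    Integrable (fun x : ℝ => g (x + t * I)) := by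
  refine (integrable_inv_one_add_sq.const_mul B).mono'
    (hg.comp_continuous (by fun_prop) fun x => by simpa using ht).aestronglyMeasurable
    (Eventually.of_forall fun x => ?_)
  simpa using hB (x + t * I) (by simpa using ht)

theorem integral_add_mul_I_eq_of_decay [NormedSpace ℂ E] [CompleteSpace E]
    (hg : DifferentiableOn ℂ g (im ⁻¹' uIcc a b))
    (hB : ∀ w : ℂ, w.im ∈ uIcc a b → ‖g w‖ ≤ B * (1 + w.re ^ 2)⁻¹) :
    ∫ x : ℝ, g (x + a * I) = ∫ x : ℝ, g (x + b * I) := by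
  have line (t : ℝ) (ht : t ∈ uIcc a b) :
      Tendsto (fun T : ℝ => ∫ x in -T..T, g (x + t * I)) atTop (𝓝 (∫ x : ℝ, g (x + t * I))) :=
    intervalIntegral_tendsto_integral (integrable_horizontal_of_decay ht hg.continuousOn hB)
      tendsto_neg_atTop_atBot tendsto_id
  have rect (T : ℝ) : (∫ x in -T..T, g (x + a * I)) = (∫ x in -T..T, g (x + b * I))
      - I • (∫ y in a..b, g (T + y * I)) + I • (∫ y in a..b, g (-T + y * I)) := by
    have H := integral_boundary_rect_eq_zero_of_differentiableOn g (-T + a * I) (T + b * I)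
      (hg.mono fun w hw => by simpa using ((mem_reProdIm).1 hw).2)
    simp only [add_re, add_im, neg_re, neg_im, ofReal_re, ofReal_im, mul_re, mul_im, I_re,
      I_im, mul_zero, mul_one, sub_zero, zero_add, add_zero, neg_zero, ofReal_neg] at H
    linear_combination (norm := module) H
  have vertical := tendsto_intervalIntegral_vertical_of_decay hB
  have right := vertical.comp (tendsto_id.mono_right atTop_le_cocompact)
  have left := vertical.comp (tendsto_neg_atTop_atBot.mono_right atBot_le_cocompact)
  refine tendsto_nhds_unique (line a left_mem_uIcc) ?_
  simpa [← rect] using ((line b right_mem_uIcc).sub (right.const_smul I)).add (left.const_smul I)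

end ContourShift

lemma integral_eq_integral_integral_cons {n : ℕ} {E : Type*} [NormedAddCommGroup E]
    [NormedSpace ℝ E] {h : (Fin (n + 1) → ℝ) → E} (hh : Integrable h) :
    ∫ x, h x = ∫ y : Fin n → ℝ, ∫ a : ℝ, h (Fin.cons a y) := by
  have e := (volume_preserving_piFinSuccAbove (fun _ : Fin (n + 1) => ℝ) 0).symm
  have he : ∀ p : ℝ × (Fin n → ℝ),
      (MeasurableEquiv.piFinSuccAbove (fun _ : Fin (n + 1) => ℝ) 0).symm p = Fin.cons p.1 p.2 :=
    fun p => by simp [MeasurableEquiv.piFinSuccAbove_symm_apply, Fin.insertNthEquiv]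
  rw [← e.integral_comp']
  exact (integral_prod_symm _
    (e.integrable_comp_emb (MeasurableEquiv.measurableEmbedding _) |>.2 hh)).trans
    (by simp only [Function.comp_def, he])

lemma max_one_norm_pow_eq {w : ℂ} (n : ℕ) :
    max 1 ‖w‖ ^ n = ‖w ^ (if 1 ≤ ‖w‖ then n else 0)‖ := by
  split_ifs with h
  · rw [max_eq_right h, norm_pow]
  · rw [max_eq_left (not_le.1 h).le, one_pow, pow_zero, norm_one]

lemma exists_bound_prod_max_one_pow {ι : Type*} [Fintype ι] {g : (ι → ℂ) → ℂ}
    {S : Set (ι → ℂ)} (hg : ∀ p : ι → ℕ, ∃ C, ∀ z ∈ S, ‖(∏ j, z j ^ p j) * g z‖ ≤ C)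
    (n : ι → ℕ) : ∃ D, ∀ z ∈ S, (∏ j, max 1 ‖z j‖ ^ n j) * ‖g z‖ ≤ D := by
  classical
  have hs (s : Finset ι) : ∀ᶠ D in atTop,
      ∀ z ∈ S, ‖(∏ j, z j ^ (if j ∈ s then n j else 0)) * g z‖ ≤ D := by
    obtain ⟨C, hC⟩ := hg _
    filter_upwards [eventually_ge_atTop C] with D hD z hz using (hC z hz).trans hD
  obtain ⟨D, hD⟩ := (eventually_all.2 hs).exists
  refine ⟨D, fun z hz => (le_of_eq ?_).trans (hD {j | 1 ≤ ‖z j‖} z hz)⟩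
  simp only [norm_mul, norm_prod, Finset.mem_filter_univ, max_one_norm_pow_eq]

lemma one_add_norm_prod_pow_le {ι : Type*} [Fintype ι] (z : ι → ℂ) (p : ι → ℕ) :
    1 + ‖∏ j, z j ^ p j‖ ≤ 2 * ∏ j, max 1 ‖z j‖ ^ p j := by
  have h1 : 1 ≤ ∏ j, max 1 ‖z j‖ ^ p j :=
    Finset.one_le_prod fun j _ => one_le_pow₀ (le_max_left _ _)
  have h2 : ‖∏ j, z j ^ p j‖ ≤ ∏ j, max 1 ‖z j‖ ^ p j := by
    simp only [norm_prod, norm_pow]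
    exact Finset.prod_le_prod (fun j _ => by positivity)
      fun j _ => pow_le_pow_left₀ (norm_nonneg _) (le_max_right _ _) _
  linarith

lemma one_add_re_sq_le (w : ℂ) : 1 + w.re ^ 2 ≤ 2 * max 1 ‖w‖ ^ 2 := by
  have h1 : 1 ≤ max 1 ‖w‖ ^ 2 := one_le_pow₀ (le_max_left _ _)
  have h2 : w.re ^ 2 ≤ max 1 ‖w‖ ^ 2 := by
    rw [← sq_abs]
    exact pow_le_pow_left₀ (abs_nonneg _) ((abs_re_le_norm w).trans (le_max_right _ _)) _
  linarith

lemma norm_mul_le_prod_inv_one_add_re_sq {ι : Type*} [Fintype ι] {F g : (ι → ℂ) → ℂ}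
    {S : Set (ι → ℂ)} {p : ι → ℕ} {C D : ℝ} (hC : 0 ≤ C)
    (hF : ∀ z ∈ S, ‖F z‖ ≤ C * (1 + ‖∏ j, z j ^ p j‖))
    (hg : ∀ z ∈ S, (∏ j, max 1 ‖z j‖ ^ (p j + 2)) * ‖g z‖ ≤ D) {z : ι → ℂ} (hz : z ∈ S) :
    ‖F z * g z‖ ≤ 2 ^ (Fintype.card ι + 1) * C * D * ∏ j, (1 + (z j).re ^ 2)⁻¹ := by
  set m : ι → ℝ := fun j => max 1 ‖z j‖
  have hFz : ‖F z‖ ≤ C * (2 * ∏ j, m j ^ p j) :=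
    (hF z hz).trans (mul_le_mul_of_nonneg_left (one_add_norm_prod_pow_le z p) hC)
  have hweight : ∏ j, (1 + (z j).re ^ 2) ≤ 2 ^ Fintype.card ι * ∏ j, m j ^ 2 := by
    calc ∏ j, (1 + (z j).re ^ 2) ≤ ∏ j, 2 * m j ^ 2 :=
          Finset.prod_le_prod (fun j _ => by positivity) fun j _ => one_add_re_sq_le (z j)
      _ = 2 ^ Fintype.card ι * ∏ j, m j ^ 2 := by
          rw [Finset.prod_mul_distrib, Finset.prod_const, Finset.card_univ]
  rw [Finset.prod_inv_distrib, ← div_eq_mul_inv, le_div_iff₀ (by positivity), norm_mul]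
  calc ‖F z‖ * ‖g z‖ * ∏ j, (1 + (z j).re ^ 2)
      ≤ C * (2 * ∏ j, m j ^ p j) * ‖g z‖ * (2 ^ Fintype.card ι * ∏ j, m j ^ 2) := by
        gcongr
    _ = 2 ^ (Fintype.card ι + 1) * C * ((∏ j, m j ^ (p j + 2)) * ‖g z‖) := by
        simp only [pow_add, Finset.prod_mul_distrib]
        ring
    _ ≤ 2 ^ (Fintype.card ι + 1) * C * D := by
        gcongr
        exact hg z hz

def realSpatialStrip {n : ℕ} (T : Set ℝ) : Set (Fin (n + 1) → ℂ) :=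
  {z | (z 0).im ∈ T ∧ ∀ i : Fin n, (z i.succ).im = 0}

lemma cons_mem_realSpatialStrip {n : ℕ} {T : Set ℝ} {w : ℂ} (hw : w.im ∈ T) (y : Fin n → ℝ) :
    (Fin.cons w fun i => (y i : ℂ) : Fin (n + 1) → ℂ) ∈ realSpatialStrip T :=
  ⟨hw, fun i => by simp⟩

lemma abs_im_lt_of_mem_realSpatialStrip {n : ℕ} {lo hi : ℝ} {z : Fin (n + 1) → ℂ}
    (hz : z ∈ realSpatialStrip (Icc lo hi)) (j : Fin (n + 1)) :
    |(z j).im| < max |lo| |hi| + 1 := by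
  cases j using Fin.cases with
  | zero => linarith [abs_le_max_abs_abs hz.1.1 hz.1.2]
  | succ i => rw [hz.2 i, abs_zero]; positivity

lemma isOpen_Wset (k : ℝ) : IsOpen (Wset k) :=
  isOpen_lt (by fun_prop) (by fun_prop)

lemma mem_Wset_of_mem_realSpatialStrip {k lo hi : ℝ} {z : Fin 4 → ℂ}
    (hz : z ∈ realSpatialStrip (Icc lo hi)) (hhi : hi < -k) : z ∈ Wset k := by
  simp only [Wset, Set.mem_ofPred_eq, hz.2, ne_eq, OfNat.ofNat_ne_zero, not_false_eq_true,
    zero_pow, Finset.sum_const_zero, Real.sqrt_zero, zero_add]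
  linarith [hz.1.2]

lemma le_dist_of_notMem_Wset {k lo hi δ : ℝ} {z v : Fin 4 → ℂ}
    (hz : z ∈ realSpatialStrip (Icc lo hi)) (hhi : hi ≤ -(k + 3 * δ)) (hv : v ∉ Wset k) :
    δ ≤ dist z v := by
  by_contra! hlt
  refine hv ?_
  have him (j : Fin 4) : |(z j).im - (v j).im| < δ :=
    calc |(z j).im - (v j).im| = |(z j - v j).im| := by rw [sub_im]
      _ ≤ dist (z j) (v j) := (abs_im_le_norm _).trans_eq (dist_eq_norm _ _).symm
      _ ≤ dist z v := dist_le_pi_dist z v j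
      _ < δ := hlt
  have hsq (i : Fin 3) : (v i.succ).im ^ 2 ≤ δ ^ 2 := by
    have := him i.succ
    rw [hz.2 i, zero_sub, abs_neg] at this
    exact sq_le_sq.2 (this.le.trans (le_abs_self δ))
  have hsqrt : Real.sqrt (∑ i : Fin 3, (v i.succ).im ^ 2) ≤ 2 * δ := by
    refine Real.sqrt_le_iff.2 ⟨by linarith [abs_nonneg ((z 0).im - (v 0).im), him 0], ?_⟩
    calc ∑ i : Fin 3, (v i.succ).im ^ 2 ≤ ∑ _i : Fin 3, δ ^ 2 := Finset.sum_le_sum fun i _ => hsq i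
      _ = 3 * δ ^ 2 := by simp
      _ ≤ (2 * δ) ^ 2 := by nlinarith [sq_nonneg δ]
  have h0 := (abs_lt.1 (him 0)).1
  show Real.sqrt _ + k < -(v 0).im
  linarith [hz.1.2]

lemma PolyBoundedOn.exists_bound_realSpatialStrip {F : (Fin 4 → ℂ) → ℂ} {k : ℝ}
    (hFb : PolyBoundedOn F (Wset k)) (lo : ℝ) {hi : ℝ} (hhi : hi < -k) :
    ∃ (p : Fin 4 → ℕ) (C : ℝ), 0 ≤ C ∧
      ∀ z ∈ realSpatialStrip (Icc lo hi), ‖F z‖ ≤ C * (1 + ‖∏ j, z j ^ p j‖) := by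
  obtain ⟨p, C, hC, hbound⟩ := hFb ((-k - hi) / 3) (by linarith) (max |lo| |hi| + 1) (by positivity)
  exact ⟨p, C, hC, fun z hz => hbound z (fun v hv => le_dist_of_notMem_Wset hz (by linarith) hv)
    fun j => (abs_im_lt_of_mem_realSpatialStrip hz j).le⟩

lemma realSpatialStrip_subset_tubeSet_ball {lo hi : ℝ} :
    realSpatialStrip (Icc lo hi) ⊆ tubeSet (Metric.ball 0 (max |lo| |hi| + 1)) := fun z hz => by
  simpa [tubeSet, pi_norm_lt_iff (by positivity : (0 : ℝ) < max |lo| |hi| + 1)] using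
    abs_im_lt_of_mem_realSpatialStrip hz

lemma MemTestSpace.differentiableAt_of_mem_realSpatialStrip {f : (Fin 4 → ℂ) → ℂ}
    (hf : MemTestSpace f) {lo hi : ℝ} {z : Fin 4 → ℂ} (hz : z ∈ realSpatialStrip (Icc lo hi)) :
    DifferentiableAt ℂ f z := by
  set R := max |lo| |hi| + 1
  have hopen : IsOpen (tubeSet (Metric.ball (0 : Fin 4 → ℝ) R)) :=
    Metric.isOpen_ball.preimage (by fun_prop)
  refine (hf _ (isCompact_closedBall 0 R) (convex_closedBall 0 R)).2.1.differentiableAt ?_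
  exact isOpen_interior.mem_nhds <| interior_maximal
    (preimage_mono Metric.ball_subset_closedBall) hopen (realSpatialStrip_subset_tubeSet_ball hz)

lemma MemTestSpace.exists_bound_realSpatialStrip {f : (Fin 4 → ℂ) → ℂ} (hf : MemTestSpace f)
    (lo hi : ℝ) (p : Fin 4 → ℕ) :
    ∃ C, ∀ z ∈ realSpatialStrip (Icc lo hi), ‖(∏ j, z j ^ p j) * f z‖ ≤ C := by
  set R := max |lo| |hi| + 1
  obtain ⟨C, hC⟩ := (hf _ (isCompact_closedBall 0 R) (convex_closedBall 0 R)).2.2 p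
  exact ⟨C, fun z hz =>
    hC z (Metric.ball_subset_closedBall (realSpatialStrip_subset_tubeSet_ball hz))⟩

def shiftIm {n : ℕ} (t : ℝ) (x : Fin (n + 1) → ℝ) : Fin (n + 1) → ℂ :=
  Fin.cons ((x 0 : ℂ) + t * I) fun i => (x i.succ : ℂ)

lemma shiftIm_cons {n : ℕ} (t a : ℝ) (y : Fin n → ℝ) :
    shiftIm t (Fin.cons a y) = Fin.cons ((a : ℂ) + t * I) fun i => (y i : ℂ) := by
  simp [shiftIm]

lemma re_shiftIm {n : ℕ} (t : ℝ) (x : Fin (n + 1) → ℝ) (j : Fin (n + 1)) :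
    (shiftIm t x j).re = x j := by
  cases j using Fin.cases <;> simp [shiftIm]

lemma continuous_shiftIm {n : ℕ} (t : ℝ) : Continuous (shiftIm (n := n) t) :=
  continuous_pi fun j => by cases j using Fin.cases <;> simp [shiftIm] <;> fun_prop

lemma differentiable_cons_ofReal {n : ℕ} (y : Fin n → ℝ) :
    Differentiable ℂ fun w : ℂ => (Fin.cons w fun i => (y i : ℂ) : Fin (n + 1) → ℂ) :=
  differentiable_pi.2 fun j => by cases j using Fin.cases <;> simp

theorem integral_shiftIm_eq {n : ℕ} {E : Type*} [NormedAddCommGroup E] [NormedSpace ℂ E]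
    [CompleteSpace E] {h : (Fin (n + 1) → ℂ) → E} {a b B : ℝ}
    (hd : ∀ z ∈ realSpatialStrip (uIcc a b), DifferentiableAt ℂ h z)
    (hB : ∀ z ∈ realSpatialStrip (uIcc a b), ‖h z‖ ≤ B * ∏ j, (1 + (z j).re ^ 2)⁻¹) :
    ∫ x, h (shiftIm a x) = ∫ x, h (shiftIm b x) := by
  have mem {t : ℝ} (ht : t ∈ uIcc a b) (x : Fin (n + 1) → ℝ) :
      shiftIm t x ∈ realSpatialStrip (uIcc a b) :=
    cons_mem_realSpatialStrip (by simpa using ht) _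
  have integrable {t : ℝ} (ht : t ∈ uIcc a b) : Integrable fun x => h (shiftIm t x) := by
    have hcont : Continuous fun x => h (shiftIm t x) := continuous_iff_continuousAt.2 fun x =>
      (hd _ (mem ht x)).continuousAt.comp (continuous_shiftIm t).continuousAt
    refine ((Integrable.fin_nat_prod fun _ => integrable_inv_one_add_sq).const_mul B).mono'
      hcont.aestronglyMeasurable (ae_of_all _ fun x => ?_)
    simpa only [re_shiftIm] using hB _ (mem ht x)
  have slices {t : ℝ} (ht : t ∈ uIcc a b) : ∫ x, h (shiftIm t x) =
      ∫ y : Fin n → ℝ, ∫ s : ℝ, h (Fin.cons ((s : ℂ) + t * I) fun i => (y i : ℂ)) := by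
    simp only [integral_eq_integral_integral_cons (integrable ht), shiftIm_cons]
  rw [slices left_mem_uIcc, slices right_mem_uIcc]
  congr 1 with y
  refine integral_add_mul_I_eq_of_decay (B := B * ∏ i, (1 + y i ^ 2)⁻¹)
    (fun w hw => ((hd _ (cons_mem_realSpatialStrip hw y)).comp w
      (differentiable_cons_ofReal y w)).differentiableWithinAt) fun w hw => ?_
  simpa [Fin.prod_univ_succ, mul_assoc, mul_comm, mul_left_comm] using
    hB _ (cons_mem_realSpatialStrip hw y)

lemma ite_eq_shiftIm (c : ℝ) (x : Fin 4 → ℝ) :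
    (fun j => if j = 0 then (x 0 : ℂ) - I * (c : ℂ) else (x j : ℂ)) = shiftIm (-c) x := by
  funext j
  cases j using Fin.cases
  · simp only [↓reduceIte, shiftIm, ofReal_neg, neg_mul, Fin.cons_zero]
    ring
  · simp [shiftIm, Fin.succ_ne_zero]

theorem stmt19_general (k : ℝ) (F f : (Fin 4 → ℂ) → ℂ)
    (hF : DifferentiableOn ℂ F (Wset k)) (hFb : PolyBoundedOn F (Wset k))
    (hf : MemTestSpace f) (ε ε' : ℝ) (hε : 0 < ε) (hε' : 0 < ε') :
    (∫ x : Fin 4 → ℝ,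
        F (fun j => if j = 0 then (x 0 : ℂ) - Complex.I * ((k + ε : ℝ) : ℂ) else (x j : ℂ)) *
        f (fun j => if j = 0 then (x 0 : ℂ) - Complex.I * ((k + ε : ℝ) : ℂ) else (x j : ℂ)))
  = (∫ x : Fin 4 → ℝ,
        F (fun j => if j = 0 then (x 0 : ℂ) - Complex.I * ((k + ε' : ℝ) : ℂ) else (x j : ℂ)) *
        f (fun j => if j = 0 then (x 0 : ℂ) - Complex.I * ((k + ε' : ℝ) : ℂ) else (x j : ℂ))) := by
  simp only [ite_eq_shiftIm]
  set a := -(k + ε)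
  set b := -(k + ε')
  have hhi : a ⊔ b < -k := max_lt (by linarith) (by linarith)
  obtain ⟨p, C, hC, hFS⟩ := hFb.exists_bound_realSpatialStrip (a ⊓ b) hhi
  obtain ⟨D, hfS⟩ :=
    exists_bound_prod_max_one_pow (hf.exists_bound_realSpatialStrip (a ⊓ b) (a ⊔ b)) (p + 2)
  refine integral_shiftIm_eq (fun z hz => ?_)
    fun z hz => norm_mul_le_prod_inv_one_add_re_sq hC hFS hfS hz
  have hzW := (isOpen_Wset k).mem_nhds (mem_Wset_of_mem_realSpatialStrip hz hhi)
  exact (hF.differentiableAt hzW).mul (hf.differentiableAt_of_mem_realSpatialStrip hz)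

theorem stmt19 (k : ℝ) (hk : 0 < k) (F f : (Fin 4 → ℂ) → ℂ)
    (hF : DifferentiableOn ℂ F (Wset k)) (hFb : PolyBoundedOn F (Wset k))
    (hf : MemTestSpace f) (ε ε' : ℝ) (hε : 0 < ε) (hε' : 0 < ε') :
    (∫ x : Fin 4 → ℝ,
        F (fun j => if j = 0 then (x 0 : ℂ) - Complex.I * ((k + ε : ℝ) : ℂ) else (x j : ℂ)) *
        f (fun j => if j = 0 then (x 0 : ℂ) - Complex.I * ((k + ε : ℝ) : ℂ) else (x j : ℂ)))
  = (∫ x : Fin 4 → ℝ,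
        F (fun j => if j = 0 then (x 0 : ℂ) - Complex.I * ((k + ε' : ℝ) : ℂ) else (x j : ℂ)) *
        f (fun j => if j = 0 then (x 0 : ℂ) - Complex.I * ((k + ε' : ℝ) : ℂ) else (x j : ℂ))) :=
  stmt19_general k F f hF hFb hf ε ε' hε hε'
end
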